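/- For the hard-core model on the 2K×3L triangular grid Λ, the communication height between a and b satisfies the lower bound Φ(a,b) − H(a) ≥ min{K, 2L} + 1; equivalently, every path from a to b in X contains a configuration whose energy is at least H(a) + min{K, 2L} + 1. -/

import Mathlib

/-!
Cut the grid into the `K` stripes formed by the rows `2x` and `2x + 1`. A stripe meets every
column once, and its sites at column distance at most two are adjacent, so it carries at most
`2L` particles; in a full stripe the occupied columns advance by exactly three, so a full stripe
agrees with `a`, `b` or `c`.

Call `σ` near-`a` if every full stripe is a stripe of `a` and some stripe of `a` has at least
`2L - 1` particles. On a path from `a` staying below `H(a) + min{K, 2L} + 1` every configuration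
has at least `2KL - min{K, 2L}` particles, and a single-site move keeps the property:
* removing a particle keeps a near-full stripe of `a`, because a configuration with more than
  `K (2L - 1)` particles has a full stripe;
* adding a particle cannot complete a stripe of type `b` or `c` while another stripe avoids that
  type: cut the columns into blocks of three whose middle column has that type; if a block met
  every stripe, a particle in its middle column would pass from stripe to stripe around the
  torus (the hard-core condition between neighbouring stripes), so every block misses a stripe
  and there are at most `2L (K - 1)` particles.

Since `a` is near-`a` and `b` is not, every path from `a` to `b` exceeds the bound.
-/

open Finset

variable (K L : ℕ) [NeZero K] [NeZero L]

/-- Vertices of the `2K × 3L` triangular grid: pairs `(i,j) ∈ (ℤ/2K) × (ℤ/6L)` with `i+j` even. -/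
abbrev Vert (K L : ℕ) [NeZero K] [NeZero L] : Type :=
  {p : ZMod (2 * K) × ZMod (6 * L) // (p.1.val + p.2.val) % 2 = 0}

/-- Adjacency in the triangular grid with periodic boundary conditions. -/
abbrev Adj (v w : Vert K L) : Prop :=
  (w.1.1 = v.1.1 ∧ (w.1.2 = v.1.2 + 2 ∨ w.1.2 = v.1.2 - 2)) ∨
  ((w.1.1 = v.1.1 + 1 ∨ w.1.1 = v.1.1 - 1) ∧ (w.1.2 = v.1.2 + 1 ∨ w.1.2 = v.1.2 - 1))

/-- A particle configuration on the grid. -/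
abbrev Cfg (K L : ℕ) [NeZero K] [NeZero L] : Type := Vert K L → Bool

/-- Hard-core condition: no two adjacent occupied sites. -/
abbrev HardCore (σ : Cfg K L) : Prop :=
  ∀ v w : Vert K L, Adj K L v w → ¬(σ v = true ∧ σ w = true)

/-- Number of particles of a configuration. -/
def nParticles (σ : Cfg K L) : ℕ := (univ.filter fun v => σ v = true).card

/-- The energy (Hamiltonian) `H(σ) = -Σ_v σ(v)`. -/
def energy (σ : Cfg K L) : ℤ := -(nParticles K L σ : ℤ)

/-- The configuration `a`: indicator of `Λ_a` (columns `j ≡ 0 (mod 3)`). -/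
def confA : Cfg K L := fun v => decide (v.1.2.val % 3 = 0)

/-- The configuration `b`: indicator of `Λ_b` (columns `j ≡ 1 (mod 3)`). -/
def confB : Cfg K L := fun v => decide (v.1.2.val % 3 = 1)

/-- The configuration `c`: indicator of `Λ_c` (columns `j ≡ 2 (mod 3)`). -/
def confC : Cfg K L := fun v => decide (v.1.2.val % 3 = 2)

/-- A path in the energy landscape: a finite sequence of hard-core configurations,
consecutive ones differing in at most one vertex. -/
structure HCPath (σ σ' : Cfg K L) where
  n : ℕ
  ω : Fin (n + 1) → Cfg K L
  first : ω 0 = σ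
  last : ω (Fin.last n) = σ'
  hc : ∀ i, HardCore K L (ω i)
  step : ∀ i : Fin n,
    ((univ : Finset (Vert K L)).filter fun v => ω i.castSucc v ≠ ω i.succ v).card ≤ 1

/-- Height of a path: maximal energy along it. -/
noncomputable def pathHeight {σ σ' : Cfg K L} (p : HCPath K L σ σ') : ℤ :=
  Finset.univ.sup' Finset.univ_nonempty fun i => energy K L (p.ω i)

/-- Communication height `Φ(σ,σ')`: minimal height over all paths from `σ` to `σ'`. -/
noncomputable def commHeight (σ σ' : Cfg K L) : ℤ :=
  sInf {h : ℤ | ∃ p : HCPath K L σ σ', pathHeight K L p = h}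

/-- The horizontal stripe `S_i = r_{2i} ∪ r_{2i+1}`. -/
abbrev inHStripe (i : ℕ) (v : Vert K L) : Prop :=
  v.1.1 = ((2 * i : ℕ) : ZMod (2 * K)) ∨ v.1.1 = ((2 * i + 1 : ℕ) : ZMod (2 * K))

/-- The vertical stripe `C_j = c_j ∪ c_{j+1} ∪ c_{j+2}` (column indices mod `6L`). -/
abbrev inVStripe (j : ℕ) (v : Vert K L) : Prop :=
  v.1.2 = ((j : ℕ) : ZMod (6 * L)) ∨ v.1.2 = ((j + 1 : ℕ) : ZMod (6 * L)) ∨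
    v.1.2 = ((j + 2 : ℕ) : ZMod (6 * L))

/-- Two configurations agree on a region. -/
def agreesOn (P : Vert K L → Prop) (σ τ : Cfg K L) : Prop := ∀ v, P v → σ v = τ v

set_option linter.unusedSectionVars false

theorem ZMod.eq_of_forall_le_add_one {n : ℕ} [NeZero n] {α : Type*} [PartialOrder α]
    {f : ZMod n → α} (h : ∀ t, f t ≤ f (t + 1)) (s t : ZMod n) : f s = f t := by
  have hle : ∀ (t : ZMod n) (m : ℕ), f t ≤ f (t + m) := by
    intro t m
    induction m with
    | zero => simp
    | succ m ih => exact ih.trans (by simpa [add_assoc] using h (t + m))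
  have hst : ∀ s t : ZMod n, f s ≤ f t := fun s t => by
    simpa using hle s (t - s).val
  exact (hst s t).antisymm (hst t s)

theorem ZMod.val_natCast_mod_of_dvd {m n : ℕ} (h : n ∣ m) (a : ℕ) :
    (a : ZMod m).val % n = a % n := by
  rw [ZMod.val_natCast, Nat.mod_mod_of_dvd a h]

theorem ZMod.val_add_natCast_mod_of_dvd {m n : ℕ} [NeZero m] (h : n ∣ m) (j : ZMod m)
    (a : ℕ) :
    (j + a).val % n = (j.val + a) % n := by
  rw [← ZMod.val_natCast_mod_of_dvd h (j.val + a)]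
  push_cast [ZMod.natCast_zmod_val]
  rfl

theorem ZMod.mul_val_add_one_modEq {n : ℕ} [NeZero n] (c : ℕ) (x : ZMod n) :
    c * (x + 1).val ≡ c * x.val + c [MOD c * n] := by
  rw [ZMod.val_add, ZMod.val_one_eq_one_mod, Nat.add_mod_mod, ← Nat.mul_mod_mul_left]
  simp [Nat.ModEq, mul_add]

theorem Fintype.sum_le_card_sub_one {ι : Type*} [Fintype ι] {f : ι → ℕ}
    (h : ∀ i, f i ≤ 1) {i₀ : ι} (h₀ : f i₀ = 0) :
    ∑ i, f i ≤ Fintype.card ι - 1 := by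
  have hlt : ∑ i, f i < ∑ _i : ι, 1 :=
    Finset.sum_lt_sum (fun i _ => h i) ⟨i₀, mem_univ _, by omega⟩
  simp only [sum_const, card_univ, smul_eq_mul, mul_one] at hlt
  omega

theorem Function.eq_update_of_card_filter_ne_le_one {α β : Type*} [Fintype α] [DecidableEq α]
    [DecidableEq β] {f g : α → β} (h : #{a | f a ≠ g a} ≤ 1) {a : α} (ha : f a ≠ g a) :
    g = Function.update f a (g a) := by
  funext b
  by_cases hb : b = a
  · subst hb; simp
  · rw [Function.update_of_ne hb]
    by_contra hfg
    exact hb (Finset.card_le_one.1 h b (by simp [Ne.symm hfg]) a (by simp [ha]))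

namespace TriangularGrid

variable {K L}

/-- Stripe `x` consists of the rows `2x` and `2x + 1` and meets column `j` in the row of the
parity of `j`; this indexes the sites by `ZMod (6L) × ZMod K` (see `site_bijective`). -/
def stripeRow (j : ZMod (6 * L)) (x : ZMod K) : ZMod (2 * K) :=
  ((2 * x.val + j.val % 2 : ℕ) : ZMod (2 * K))

theorem val_stripeRow (j : ZMod (6 * L)) (x : ZMod K) :
    (stripeRow j x).val = 2 * x.val + j.val % 2 := by
  have := ZMod.val_lt x
  exact ZMod.val_cast_of_lt (by omega)

def site (j : ZMod (6 * L)) (x : ZMod K) : Vert K L :=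
  ⟨(stripeRow j x, j), show ((stripeRow j x).val + j.val) % 2 = 0 by rw [val_stripeRow]; omega⟩

theorem site_injective :
    Function.Injective (fun p : ZMod (6 * L) × ZMod K => site (K := K) p.1 p.2) := by
  rintro ⟨j, x⟩ ⟨j', x'⟩ h
  obtain ⟨hrow, hj⟩ : stripeRow j x = stripeRow j' x' ∧ j = j' :=
    Prod.ext_iff.1 (congrArg Subtype.val h)
  subst hj
  have := congrArg ZMod.val hrow
  rw [val_stripeRow, val_stripeRow] at this
  exact Prod.ext rfl (ZMod.val_injective _ (show x.val = x'.val by omega))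

theorem site_inj {j j' : ZMod (6 * L)} {x x' : ZMod K} :
    site j x = site j' x' ↔ j = j' ∧ x = x' :=
  (site_injective (K := K) (L := L)).eq_iff (a := (j, x)) (b := (j', x')) |>.trans Prod.ext_iff

theorem site_surjective (v : Vert K L) : ∃ j x, site j x = v := by
  obtain ⟨⟨i, j⟩, hv⟩ := v
  have hi := ZMod.val_lt i
  have hx : ((i.val / 2 : ℕ) : ZMod K).val = i.val / 2 := ZMod.val_cast_of_lt (by omega)
  refine ⟨j, (i.val / 2 : ℕ), Subtype.ext (Prod.ext (ZMod.val_injective _ ?_) rfl)⟩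
  change (stripeRow j _).val = i.val
  have : j.val % 2 = i.val % 2 := by simp only at hv; omega
  rw [val_stripeRow, hx]
  omega

theorem site_bijective :
    Function.Bijective (fun p : ZMod (6 * L) × ZMod K => site (K := K) p.1 p.2) :=
  ⟨site_injective, fun v => by obtain ⟨j, x, h⟩ := site_surjective v; exact ⟨(j, x), h⟩⟩

theorem val_add_one_mod_two (j : ZMod (6 * L)) : (j + 1).val % 2 = (j.val + 1) % 2 := by
  simpa using ZMod.val_add_natCast_mod_of_dvd (⟨3 * L, by ring⟩ : 2 ∣ 6 * L) j 1

theorem val_sub_one_mod_two (j : ZMod (6 * L)) : (j - 1).val % 2 = (j.val + 1) % 2 := by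
  have h := val_add_one_mod_two (j - 1)
  rw [sub_add_cancel] at h
  omega

theorem stripeRow_add_one (j : ZMod (6 * L)) (x : ZMod K) :
    stripeRow (j + 1) x = stripeRow j x + 1 ∨ stripeRow (j + 1) x = stripeRow j x - 1 := by
  have hpar := val_add_one_mod_two j
  unfold stripeRow
  rcases Nat.mod_two_eq_zero_or_one j.val with h | h
  · left; rw [hpar, show (j.val + 1) % 2 = 1 by omega, h]; push_cast; ring
  · right; rw [hpar, show (j.val + 1) % 2 = 0 by omega, h]; push_cast; ring

theorem adj_site_add_one (j : ZMod (6 * L)) (x : ZMod K) :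
    Adj K L (site j x) (site (j + 1) x) :=
  Or.inr ⟨stripeRow_add_one j x, Or.inl rfl⟩

theorem adj_site_add_two (j : ZMod (6 * L)) (x : ZMod K) :
    Adj K L (site j x) (site (j + 2) x) := by
  have hpar := ZMod.val_add_natCast_mod_of_dvd (⟨3 * L, by ring⟩ : 2 ∣ 6 * L) j 2
  refine Or.inl ⟨?_, Or.inl rfl⟩
  simp only [site, stripeRow]
  rw [Nat.cast_ofNat] at hpar
  rw [hpar, Nat.add_mod_right]

theorem adj_site_add_one_stripe {j j' : ZMod (6 * L)} (hj : j.val % 2 = 1)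
    (hj' : j' = j + 1 ∨ j' = j - 1) (x : ZMod K) : Adj K L (site j x) (site j' (x + 1)) := by
  have hpar : j'.val % 2 = 0 := by
    rcases hj' with rfl | rfl
    · rw [val_add_one_mod_two]; omega
    · rw [val_sub_one_mod_two]; omega
  refine Or.inr ⟨Or.inl ?_, ?_⟩
  · change stripeRow j' (x + 1) = stripeRow j x + 1
    rw [stripeRow, stripeRow, hpar, hj, add_zero,
      (ZMod.natCast_eq_natCast_iff _ _ _).2 (ZMod.mul_val_add_one_modEq 2 x)]
    push_cast; ring
  · rcases hj' with rfl | rfl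
    exacts [Or.inl rfl, Or.inr rfl]

/-- Column `3t + s + k`; for `k < 3` these are the columns of the `t`-th of the `2L` blocks of
three consecutive columns into which the column circle is cut, starting at column `s`. -/
def blockCol (s : ℕ) (t : ZMod (2 * L)) (k : ℕ) : ZMod (6 * L) :=
  ((3 * t.val + s + k : ℕ) : ZMod (6 * L))

theorem blockCol_add (s : ℕ) (t : ZMod (2 * L)) (k d : ℕ) :
    blockCol s t (k + d) = blockCol s t k + d := by
  simp only [blockCol]; push_cast; ring

theorem blockCol_add_one (s : ℕ) (t : ZMod (2 * L)) (k : ℕ) :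
    blockCol s (t + 1) k = blockCol s t (k + 3) := by
  have h := ZMod.mul_val_add_one_modEq 3 t
  rw [← mul_assoc, show 3 * 2 = 6 from rfl] at h
  simp only [blockCol]
  rw [ZMod.natCast_eq_natCast_iff]
  convert (h.add_right s).add_right k using 1
  ring

theorem val_blockCol_mod_two (s : ℕ) (t : ZMod (2 * L)) (k : ℕ) :
    (blockCol s t k).val % 2 = (3 * t.val + s + k) % 2 :=
  ZMod.val_natCast_mod_of_dvd ⟨3 * L, by ring⟩ _

theorem val_blockCol_mod_three (s : ℕ) (t : ZMod (2 * L)) (k : ℕ) :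
    (blockCol s t k).val % 3 = (s + k) % 3 := by
  rw [blockCol, ZMod.val_natCast_mod_of_dvd ⟨2 * L, by ring⟩]
  omega

theorem blockCol_bijective (s : ℕ) :
    Function.Bijective (fun p : ZMod (2 * L) × Fin 3 => blockCol s p.1 p.2) := by
  rw [Fintype.bijective_iff_injective_and_card]
  refine ⟨?_, by simp [ZMod.card]; ring⟩
  rintro ⟨t, k⟩ ⟨t', k'⟩ h
  have h' : 3 * t.val + k + s ≡ 3 * t'.val + k' + s [MOD 6 * L] := by
    rw [add_right_comm _ (k : ℕ), add_right_comm _ (k' : ℕ)]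
    exact (ZMod.natCast_eq_natCast_iff _ _ _).1 h
  have ht := ZMod.val_lt t
  have ht' := ZMod.val_lt t'
  have hk := k.isLt
  have hk' := k'.isLt
  have heq : 3 * t.val + k = 3 * t'.val + k' := by
    have h'' := Nat.ModEq.add_right_cancel' s h'
    rwa [Nat.ModEq, Nat.mod_eq_of_lt (show 3 * t.val + k < 6 * L by omega),
      Nat.mod_eq_of_lt (show 3 * t'.val + k' < 6 * L by omega)] at h''
  exact Prod.ext (ZMod.val_injective _ (show t.val = t'.val by omega))
    (Fin.ext (show (k : ℕ) = k' by omega))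

theorem adj_site_blockCol (s : ℕ) (t : ZMod (2 * L)) {k k' : ℕ} (hk : k < k') (hk' : k' < k + 3)
    (x : ZMod K) : Adj K L (site (blockCol s t k) x) (site (blockCol s t k') x) := by
  obtain ⟨d, rfl⟩ := Nat.exists_eq_add_of_lt hk
  rw [add_assoc, blockCol_add]
  obtain hd | hd : d + 1 = 1 ∨ d + 1 = 2 := by omega
  · simpa [hd] using adj_site_add_one (blockCol s t k) x
  · simpa [hd] using adj_site_add_two (blockCol s t k) x

def stripeCount (σ : Cfg K L) (x : ZMod K) : ℕ := #{j | σ (site j x) = true}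

def blockCount (s : ℕ) (σ : Cfg K L) (x : ZMod K) (t : ZMod (2 * L)) : ℕ :=
  #{k : Fin 3 | σ (site (blockCol s t k) x) = true}

theorem nParticles_eq_sum_stripeCount (σ : Cfg K L) :
    nParticles K L σ = ∑ x, stripeCount σ x := by
  simp only [nParticles, stripeCount, card_filter]
  rw [← Fintype.sum_bijective _ site_bijective
    (fun p => if σ (site p.1 p.2) = true then 1 else 0) _ (fun _ => rfl),
    Fintype.sum_prod_type_right]

theorem stripeCount_eq_sum_blockCount (s : ℕ) (σ : Cfg K L) (x : ZMod K) :
    stripeCount σ x = ∑ t, blockCount s σ x t := by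
  simp only [stripeCount, blockCount, card_filter]
  rw [← Fintype.sum_bijective _ (blockCol_bijective s)
    (fun p => if σ (site (blockCol s p.1 p.2) x) = true then 1 else 0) _ (fun _ => rfl),
    Fintype.sum_prod_type]

variable {σ : Cfg K L}

theorem blockCount_le_one (hσ : HardCore K L σ) (s : ℕ) (x : ZMod K) (t : ZMod (2 * L)) :
    blockCount s σ x t ≤ 1 := by
  refine card_le_one.2 fun k hk k' hk' => ?_
  simp only [mem_filter, mem_univ, true_and] at hk hk'
  rcases lt_trichotomy (k : ℕ) k' with h | h | h
  · exact (hσ _ _ (adj_site_blockCol s t h (by omega) x) ⟨hk, hk'⟩).elim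
  · exact Fin.ext h
  · exact (hσ _ _ (adj_site_blockCol s t h (by omega) x) ⟨hk', hk⟩).elim

theorem stripeCount_le (hσ : HardCore K L σ) (x : ZMod K) : stripeCount σ x ≤ 2 * L := by
  rw [stripeCount_eq_sum_blockCount 0]
  calc ∑ t, blockCount 0 σ x t ≤ ∑ _t : ZMod (2 * L), 1 :=
        sum_le_sum fun t _ => blockCount_le_one hσ 0 x t
    _ = 2 * L := by simp [ZMod.card]

theorem exists_site_of_stripeCount_pos {x : ZMod K} (h : 0 < stripeCount σ x) :
    ∃ j, σ (site j x) = true := by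
  simpa [stripeCount, filter_nonempty_iff] using card_pos.1 h

theorem exists_stripeCount_eq_of_lt (hσ : HardCore K L σ)
    (h : K * (2 * L - 1) < nParticles K L σ) : ∃ x, stripeCount σ x = 2 * L := by
  by_contra! hx
  have : ∑ x, stripeCount σ x ≤ ∑ _x : ZMod K, (2 * L - 1) :=
    sum_le_sum fun x _ => by have := stripeCount_le hσ x; have := hx x; omega
  simp [ZMod.card, ← nParticles_eq_sum_stripeCount] at this
  omega

theorem exists_forall_site_iff_of_stripeCount_eq (hσ : HardCore K L σ) {x : ZMod K}
    (hfull : stripeCount σ x = 2 * L) :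
    ∃ r < 3, ∀ j, σ (site j x) = true ↔ j.val % 3 = r := by
  have hone : ∀ t, blockCount 0 σ x t = 1 := by
    have hsum : ∑ t, blockCount 0 σ x t = ∑ _t : ZMod (2 * L), 1 := by
      simp [← stripeCount_eq_sum_blockCount, hfull, ZMod.card]
    exact fun t => (sum_eq_sum_iff_of_le fun t _ => blockCount_le_one hσ 0 x t).1 hsum t
      (mem_univ t)
  choose o ho using fun t => card_eq_one.1 (hone t)
  have hocc : ∀ t (k : Fin 3), σ (site (blockCol 0 t k) x) = true ↔ k = o t := fun t k => by
    simpa using Finset.ext_iff.1 (ho t) k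
  have hmono : ∀ t, o t ≤ o (t + 1) := fun t => by
    by_contra! hlt
    have hadj := adj_site_blockCol 0 t (k := o t) (k' := o (t + 1) + 3) (by omega) (by omega) x
    rw [← blockCol_add_one] at hadj
    exact hσ _ _ hadj ⟨(hocc t _).2 rfl, (hocc (t + 1) _).2 rfl⟩
  refine ⟨o 0, (o 0).isLt, fun j => ?_⟩
  obtain ⟨⟨t, k⟩, rfl⟩ := (blockCol_bijective 0).2 j
  rw [hocc, val_blockCol_mod_three, ZMod.eq_of_forall_le_add_one hmono t 0, Fin.ext_iff]
  omega

theorem site_blockCol_one_eq_of_forall_exists (hσ : HardCore K L σ) (s : ℕ) (t : ZMod (2 * L))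
    (hne : ∀ x, ∃ k : Fin 3, σ (site (blockCol s t k) x) = true) (x y : ZMod K) :
    σ (site (blockCol s t 1) x) = σ (site (blockCol s t 1) y) := by
  have h01 : blockCol s t 1 = blockCol s t 0 + 1 := by simpa using blockCol_add s t 0 1
  have h12 : blockCol s t 2 = blockCol s t 1 + 1 := by simpa using blockCol_add s t 1 1
  have hpar := val_blockCol_mod_two s t
  set P := fun x => σ (site (blockCol s t 1) x)
  rcases Nat.mod_two_eq_zero_or_one (3 * t.val + s) with hst | hst
  · -- the middle column is odd: a particle there forbids both outer columns one stripe up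
    have hodd : (blockCol s t 1).val % 2 = 1 := by rw [hpar]; omega
    refine ZMod.eq_of_forall_le_add_one (f := P) (fun x => Bool.le_iff_imp.2 fun hx => ?_) x y
    obtain ⟨k, hk⟩ := hne (x + 1)
    fin_cases k
    · exact (hσ _ _ (adj_site_add_one_stripe hodd (Or.inr (eq_sub_of_add_eq h01.symm)) x)
        ⟨hx, hk⟩).elim
    · exact hk
    · exact (hσ _ _ (adj_site_add_one_stripe hodd (Or.inl h12) x) ⟨hx, hk⟩).elim
  · -- the outer columns are odd: a particle in one of them forbids the middle one stripe up
    have hodd0 : (blockCol s t 0).val % 2 = 1 := by rw [hpar]; omega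
    have hodd2 : (blockCol s t 2).val % 2 = 1 := by rw [hpar]; omega
    refine (ZMod.eq_of_forall_le_add_one (α := Boolᵒᵈ) (f := P)
      (fun x => Bool.le_iff_imp.2 fun hx => ?_) x y)
    obtain ⟨k, hk⟩ := hne x
    fin_cases k
    · exact (hσ _ _ (adj_site_add_one_stripe hodd0 (Or.inl h01) x) ⟨hk, hx⟩).elim
    · exact hk
    · exact (hσ _ _ (adj_site_add_one_stripe hodd2 (Or.inr (eq_sub_of_add_eq h12.symm)) x)
        ⟨hk, hx⟩).elim

theorem nParticles_le_of_forall_site {p q : ZMod K} {r : ℕ} (hσ : HardCore K L σ) (hr : r < 3)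
    (hq : ∀ j, j.val % 3 = r → σ (site j q) = true)
    (hp : ∀ j, j.val % 3 = r → σ (site j p) = false) :
    nParticles K L σ ≤ 2 * L * (K - 1) := by
  have hmid : ∀ t : ZMod (2 * L), (blockCol (r + 2) t 1).val % 3 = r := fun t => by
    rw [val_blockCol_mod_three]; omega
  have hgap : ∀ t, ∃ x, blockCount (r + 2) σ x t = 0 := fun t => by
    by_contra! hne
    have hocc : ∀ x, ∃ k : Fin 3, σ (site (blockCol (r + 2) t k) x) = true := fun x => by
      simpa [blockCount, filter_nonempty_iff] using card_pos.1 (Nat.pos_of_ne_zero (hne x))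
    have := site_blockCol_one_eq_of_forall_exists hσ (r + 2) t hocc q p
    rw [hq _ (hmid t), hp _ (hmid t)] at this
    exact Bool.noConfusion this
  calc nParticles K L σ = ∑ t, ∑ x, blockCount (r + 2) σ x t := by
        simp only [nParticles_eq_sum_stripeCount, stripeCount_eq_sum_blockCount (r + 2)]
        exact sum_comm
    _ ≤ ∑ _t : ZMod (2 * L), (K - 1) := sum_le_sum fun t _ => by
        obtain ⟨x, hx⟩ := hgap t
        simpa [ZMod.card] using Fintype.sum_le_card_sub_one (blockCount_le_one hσ _ · t) hx
    _ = 2 * L * (K - 1) := by simp [ZMod.card]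

def StripeSubsetA (σ : Cfg K L) (x : ZMod K) : Prop :=
  ∀ j, σ (site j x) = true → j.val % 3 = 0

/-- The invariant of low paths leaving `a`. -/
def NearA (σ : Cfg K L) : Prop :=
  (∀ x, stripeCount σ x = 2 * L → StripeSubsetA σ x) ∧
    ∃ x, StripeSubsetA σ x ∧ 2 * L - 1 ≤ stripeCount σ x

section Update

variable {τ : Cfg K L} {j : ZMod (6 * L)} {x : ZMod K}

theorem update_site_of_ne {y : ZMod K} (hy : y ≠ x) (b : Bool) (j' : ZMod (6 * L)) :
    Function.update τ (site j x) b (site j' y) = τ (site j' y) :=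
  Function.update_of_ne (fun h => hy (site_inj.1 h).2) _ _

theorem stripeSubsetA_update_iff_of_ne {y : ZMod K} (hy : y ≠ x) (b : Bool) :
    StripeSubsetA (Function.update τ (site j x) b) y ↔ StripeSubsetA τ y := by
  simp only [StripeSubsetA, update_site_of_ne hy]

theorem stripeCount_update (hv : τ (site j x) = false) (y : ZMod K) :
    stripeCount (Function.update τ (site j x) true) y =
      stripeCount τ y + if y = x then 1 else 0 := by
  split_ifs with hy
  · subst hy
    rw [stripeCount, stripeCount,
      ← card_insert_of_notMem (a := j) (s := {j' | τ (site j' y) = true}) (by simp [hv])]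
    congr 1
    ext j'
    by_cases hj : j' = j
    · simp [hj]
    · simp [hj, Function.update_of_ne (fun h => hj (site_inj.1 h).1)]
  · simp only [stripeCount, update_site_of_ne hy, add_zero]

theorem nParticles_update {v : Vert K L} (hv : τ v = false) :
    nParticles K L (Function.update τ v true) = nParticles K L τ + 1 := by
  rw [nParticles, nParticles,
    ← card_insert_of_notMem (a := v) (s := {w | τ w = true}) (by simp [hv])]
  congr 1
  ext w
  by_cases hw : w = v
  all_goals simp [hw]

theorem update_eq_true_of_eq_true {v w : Vert K L} (hw : τ w = true) :
    Function.update τ v true w = true := by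
  by_cases h : w = v
  · simp [h]
  · rwa [Function.update_of_ne h]

theorem nearA_of_nearA_update (hτ' : HardCore K L (Function.update τ (site j x) true))
    (hv : τ (site j x) = false)
    (hN : K * (2 * L - 1) < nParticles K L (Function.update τ (site j x) true))
    (h : NearA (Function.update τ (site j x) true)) : NearA τ := by
  have hcount := stripeCount_update hv
  set τ' := Function.update τ (site j x) true
  have hsub : ∀ y, StripeSubsetA τ' y → StripeSubsetA τ y := fun y hy j' hj' =>
    hy j' (update_eq_true_of_eq_true hj')
  refine ⟨fun y hy => hsub y (h.1 y ?_), ?_⟩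
  · have := stripeCount_le hτ' y
    have := hcount y
    split_ifs at this <;> omega
  · obtain ⟨F, hF⟩ := exists_stripeCount_eq_of_lt hτ' hN
    refine ⟨F, hsub F (h.1 F hF), ?_⟩
    have := hcount F
    split_ifs at this <;> omega

theorem stripeSubsetA_update_of_stripeCount_eq
    (hτ' : HardCore K L (Function.update τ (site j x) true))
    (hv : τ (site j x) = false)
    (hN : 2 * L * (K - 1) < nParticles K L (Function.update τ (site j x) true))
    (h : NearA τ) {y : ZMod K} (hy : stripeCount (Function.update τ (site j x) true) y = 2 * L) :
    StripeSubsetA (Function.update τ (site j x) true) y := by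
  by_cases hyx : y = x
  swap
  · rw [stripeCount_update hv, if_neg hyx, add_zero] at hy
    exact (stripeSubsetA_update_iff_of_ne hyx true).2 (h.1 y hy)
  subst hyx
  obtain ⟨r, hr, hclass⟩ := exists_forall_site_iff_of_stripeCount_eq hτ' hy
  suffices r = 0 from fun j' hj' => this ▸ (hclass j').1 hj'
  obtain ⟨w, hw, hwcount⟩ := h.2
  by_cases hwy : w = y
  · -- a particle of the old stripe `w` has class `0` and survives
    subst hwy
    have := NeZero.pos L
    obtain ⟨j₀, hj₀⟩ := exists_site_of_stripeCount_pos (σ := τ) (x := w) (by omega)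
    rw [← (hclass j₀).1 (update_eq_true_of_eq_true hj₀), hw j₀ hj₀]
  · by_contra hr0
    refine hN.not_ge (nParticles_le_of_forall_site (p := w) hτ' hr (fun j' => (hclass j').2)
      fun j' hj' => ?_)
    rw [update_site_of_ne hwy]
    by_contra hocc
    exact hr0 (hj' ▸ hw j' (by simpa using hocc))

theorem nearA_update (hτ' : HardCore K L (Function.update τ (site j x) true))
    (hv : τ (site j x) = false)
    (hN : 2 * L * (K - 1) < nParticles K L (Function.update τ (site j x) true))
    (h : NearA τ) : NearA (Function.update τ (site j x) true) := by
  have hfull := fun y => stripeSubsetA_update_of_stripeCount_eq (y := y) hτ' hv hN h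
  refine ⟨hfull, ?_⟩
  obtain ⟨w, hw, hwcount⟩ := h.2
  have hcount := stripeCount_update hv w
  by_cases hwfull : stripeCount (Function.update τ (site j x) true) w = 2 * L
  · exact ⟨w, hfull w hwfull, by omega⟩
  · have hwx : w ≠ x := fun hwx => by
      have := stripeCount_le hτ' w
      rw [if_pos hwx] at hcount
      omega
    rw [if_neg hwx, add_zero] at hcount
    exact ⟨w, (stripeSubsetA_update_iff_of_ne hwx true).2 hw, hcount ▸ hwcount⟩

end Update

theorem lt_add_one_of_le_add_min {n : ℕ} (h : 2 * K * L ≤ n + min K (2 * L)) :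
    K * (2 * L - 1) < n + 1 ∧ 2 * L * (K - 1) < n + 1 := by
  have hK : K * (2 * L - 1) + K = 2 * K * L := by
    have := NeZero.pos L
    rw [Nat.mul_sub, mul_one, Nat.sub_add_cancel (Nat.le_mul_of_pos_right K (by omega))]
    ring
  have hL : 2 * L * (K - 1) + 2 * L = 2 * K * L := by
    have := NeZero.pos K
    rw [Nat.mul_sub, mul_one, Nat.sub_add_cancel (Nat.le_mul_of_pos_right _ this)]
    ring
  have := min_le_left K (2 * L)
  have := min_le_right K (2 * L)
  omega

theorem nearA_iff_of_step {σ σ' : Cfg K L} (hσ : HardCore K L σ) (hσ' : HardCore K L σ')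
    (hstep : #{v | σ v ≠ σ' v} ≤ 1) (hN : 2 * K * L ≤ nParticles K L σ + min K (2 * L))
    (hN' : 2 * K * L ≤ nParticles K L σ' + min K (2 * L)) : NearA σ ↔ NearA σ' := by
  by_cases heq : σ = σ'
  · rw [heq]
  obtain ⟨v, hv⟩ : ∃ v, σ v ≠ σ' v := by
    by_contra! h
    exact heq (funext h)
  obtain ⟨j, x, rfl⟩ := site_surjective v
  cases hσv : σ (site j x)
  · have hσ'v : σ' (site j x) = true := by revert hv; cases σ' (site j x) <;> simp [hσv]
    have h := Function.eq_update_of_card_filter_ne_le_one hstep hv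
    rw [hσ'v] at h
    subst h
    obtain ⟨hK, hL⟩ := lt_add_one_of_le_add_min hN
    rw [← nParticles_update hσv] at hK hL
    exact ⟨nearA_update hσ' hσv hL, nearA_of_nearA_update hσ' hσv hK⟩
  · have hσ'v : σ' (site j x) = false := by revert hv; cases σ' (site j x) <;> simp [hσv]
    have h := Function.eq_update_of_card_filter_ne_le_one (f := σ') (g := σ)
      (by simpa only [ne_comm] using hstep) (Ne.symm hv)
    rw [hσv] at h
    subst h
    obtain ⟨hK, hL⟩ := lt_add_one_of_le_add_min hN'
    rw [← nParticles_update hσ'v] at hK hL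
    exact ⟨nearA_of_nearA_update hσ hσ'v hK, nearA_update hσ hσ'v hL⟩

theorem nearA_of_path {σ σ' : Cfg K L} (p : HCPath K L σ σ')
    (hN : ∀ i, 2 * K * L ≤ nParticles K L (p.ω i) + min K (2 * L)) (h : NearA σ) :
    NearA σ' := by
  suffices ∀ i, NearA (p.ω i) by simpa [p.last] using this (Fin.last p.n)
  intro i
  induction i using Fin.induction with
  | zero => simpa [p.first] using h
  | succ i ih =>
    exact (nearA_iff_of_step (p.hc _) (p.hc _) (p.step i) (hN _) (hN _)).1 ih

theorem stripeCount_confA (x : ZMod K) : stripeCount (confA K L) x = 2 * L := by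
  have hblock : ∀ t, blockCount 0 (confA K L) x t = 1 := fun t => by
    rw [blockCount, card_eq_one]
    refine ⟨0, Finset.ext fun k => ?_⟩
    simp only [mem_filter, mem_univ, true_and, mem_singleton, Fin.ext_iff, Fin.val_zero, confA,
      site, decide_eq_true_eq, val_blockCol_mod_three]
    omega
  simp [stripeCount_eq_sum_blockCount 0, hblock, ZMod.card]

theorem nParticles_confA : nParticles K L (confA K L) = 2 * K * L := by
  simp [nParticles_eq_sum_stripeCount, stripeCount_confA, ZMod.card]
  ring

theorem nearA_confA : NearA (confA K L) :=
  have hsub : ∀ x, StripeSubsetA (confA K L) x := fun _ _ hj => of_decide_eq_true hj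
  ⟨fun x _ => hsub x, 0, hsub 0, by rw [stripeCount_confA]; omega⟩

theorem not_nearA_confB : ¬ NearA (confB K L) := by
  rintro ⟨-, x, hx, hcount⟩
  have := NeZero.pos L
  obtain ⟨j, hj⟩ := exists_site_of_stripeCount_pos (σ := confB K L) (x := x) (by omega)
  have h0 : j.val % 3 = 0 := hx j hj
  have h1 : j.val % 3 = 1 := of_decide_eq_true hj
  omega

theorem energy_confA : energy K L (confA K L) = -((2 * K * L : ℕ) : ℤ) := by
  rw [energy, nParticles_confA]

theorem le_pathHeight (p : HCPath K L (confA K L) (confB K L)) :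
    energy K L (confA K L) + (((min K (2 * L) : ℕ) : ℤ) + 1) ≤ pathHeight K L p := by
  by_contra! hlt
  rw [pathHeight, sup'_lt_iff] at hlt
  refine not_nearA_confB (nearA_of_path p (fun i => ?_) nearA_confA)
  have := hlt i (mem_univ i)
  rw [energy, energy_confA] at this
  omega

theorem energy_confA_add_le_zero :
    energy K L (confA K L) + (((min K (2 * L) : ℕ) : ℤ) + 1) ≤ 0 := by
  have hKL : 2 * K ≤ 2 * K * L := Nat.le_mul_of_pos_right _ (NeZero.pos L)
  have hle : min K (2 * L) + 1 ≤ 2 * K * L := by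
    have := min_le_left K (2 * L)
    have := NeZero.pos K
    omega
  rw [energy_confA]
  have : ((min K (2 * L) : ℕ) : ℤ) + 1 ≤ ((2 * K * L : ℕ) : ℤ) := by exact_mod_cast hle
  linarith

/-- The hypothesis `c ≤ 0` covers the case without paths, where `commHeight` is `sInf ∅ = 0`. -/
theorem le_commHeight {σ σ' : Cfg K L} {c : ℤ} (hc : c ≤ 0)
    (h : ∀ p : HCPath K L σ σ', c ≤ pathHeight K L p) : c ≤ commHeight K L σ σ' := by
  rcases Set.eq_empty_or_nonempty {h : ℤ | ∃ p : HCPath K L σ σ', pathHeight K L p = h} with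
    hS | hS
  · rwa [commHeight, hS, Int.csInf_empty]
  · exact le_csInf hS (by rintro _ ⟨p, rfl⟩; exact h p)

end TriangularGrid

theorem comm_height_lower_bound :
    commHeight K L (confA K L) (confB K L) - energy K L (confA K L)
        ≥ ((min K (2 * L) : ℕ) : ℤ) + 1 ∧
    ∀ p : HCPath K L (confA K L) (confB K L),
      energy K L (confA K L) + (((min K (2 * L) : ℕ) : ℤ) + 1) ≤ pathHeight K L p := by
  have hpath := TriangularGrid.le_pathHeight (K := K) (L := L)
  have hc := TriangularGrid.energy_confA_add_le_zero (K := K) (L := L)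
  exact ⟨by linarith [TriangularGrid.le_commHeight hc hpath], hpath⟩
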